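/- arXiv:math/0108074 — 2 statements merged into one kernel-verified Lean document; each statement's English description precedes it below -/
import Mathlib

section
/- Let A be an invertible m×m tridiagonal matrix whose leading principal minors D_1,…,D_{m-1} and trailing principal minors are all nonzero. With Λ_{i+1} = D_i/D_{i-1} and G_{i-1} equal to the ratio of trailing minors (from rows/columns i..m over i+1..m), the diagonal entries of A^{-1} are given by (A^{-1})_{ii} = (Λ_{i+1} + G_{i-1} − q_i)^{-1}. -/
/-- The `k`-th leading principal minor of an `m × m` matrix (`leadingMinor A 0 = 1`). -/
noncomputable def leadingMinor {m : ℕ} (A : Matrix (Fin m) (Fin m) ℝ) (k : ℕ) : ℝ :=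
  if h : k ≤ m then (A.submatrix (Fin.castLE h) (Fin.castLE h)).det else 0

/-- Determinant of the trailing submatrix of `A` on rows and columns `k, …, m`
(`1`-based indexing; `trailingMinor A (m+1) = 1`). -/
noncomputable def trailingMinor {m : ℕ} (A : Matrix (Fin m) (Fin m) ℝ) (k : ℕ) : ℝ :=
  if h : 1 ≤ k ∧ k ≤ m + 1 then
    (A.submatrix
        (fun i : Fin (m + 1 - k) => (⟨k - 1 + i, by have := i.isLt; omega⟩ : Fin m))
        (fun i : Fin (m + 1 - k) => (⟨k - 1 + i, by have := i.isLt; omega⟩ : Fin m))).det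
  else 0

/-!
Deleting row and column `i` of a tridiagonal matrix leaves two decoupled tridiagonal blocks, so
the cofactor of `aᵢᵢ` is `D_{i-1} E_{i+1}`. Cutting the chain between rows `i` and `i + 1` gives
`det A = D_i E_{i+1} - p_{i+1} r_{i+1} D_{i-1} E_{i+2}` (by induction on `i`, from the expansion
along the first row), and together with `E_i = q_i E_{i+1} - p_{i+1} r_{i+1} E_{i+2}` this reads
`det A = D_{i-1} E_{i+1} (Λ_{i+1} + G_{i-1} - q_i)`.
-/

open Matrix

section Tridiagonal

variable {R : Type*} [CommRing R] (p q r : ℕ → R)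

/-- Rows and columns `s + 1, …, s + n` (counted from `1`) of the infinite tridiagonal matrix with
diagonal `q`, subdiagonal `p` and superdiagonal `r`. -/
def tridiag (s n : ℕ) : Matrix (Fin n) (Fin n) R :=
  Matrix.of fun i j =>
    if (i : ℕ) = j then q (s + i + 1)
    else if (i : ℕ) = j + 1 then p (s + i + 1)
    else if (j : ℕ) = i + 1 then r (s + j + 1)
    else 0

theorem tridiag_apply_eq_zero {s n : ℕ} {i j : Fin n}
    (h : (i : ℕ) + 1 < j ∨ (j : ℕ) + 1 < i) : tridiag p q r s n i j = 0 := by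
  simp only [tridiag, of_apply]
  split_ifs <;> first | rfl | omega

theorem tridiag_submatrix {l n : ℕ} (s t : ℕ) {f g : Fin l → Fin n}
    (hf : ∀ i, (f i : ℕ) = t + i) (hg : ∀ i, (g i : ℕ) = t + i) :
    (tridiag p q r s n).submatrix f g = tridiag p q r (s + t) l := by
  ext i j
  simp only [submatrix_apply, tridiag, of_apply, hf, hg]
  split_ifs <;> first | rfl | omega | (congr 1; omega)

theorem det_tridiag_zero (s : ℕ) : (tridiag p q r s 0).det = 1 := det_fin_zero

theorem det_tridiag_one (s : ℕ) : (tridiag p q r s 1).det = q (s + 1) := by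
  simp [tridiag]

theorem det_tridiag_succ_succ (s n : ℕ) :
    (tridiag p q r s (n + 2)).det =
      q (s + 1) * (tridiag p q r (s + 1) (n + 1)).det
        - p (s + 2) * r (s + 2) * (tridiag p q r (s + 2) n).det := by
  set T := tridiag p q r s (n + 2)
  have h00 : T 0 0 = q (s + 1) := by simp [T, tridiag]
  have h01 : T 0 1 = r (s + 2) := by simp [T, tridiag]
  have h10 : T 1 0 = p (s + 2) := by simp [T, tridiag]
  have hrow : ∀ j : Fin n, T 0 j.succ.succ = 0 := fun j =>
    tridiag_apply_eq_zero p q r (Or.inl (by simp))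
  have hcol : ∀ i : Fin n, T i.succ.succ 0 = 0 := fun i =>
    tridiag_apply_eq_zero p q r (Or.inr (by simp))
  have hminor0 : (T.submatrix Fin.succ (Fin.succAbove 0)).det =
      (tridiag p q r (s + 1) (n + 1)).det := by
    rw [Fin.succAbove_zero,
      tridiag_submatrix p q r s 1 (fun i => by simp [add_comm]) (fun i => by simp [add_comm])]
  have hminor1 : (T.submatrix Fin.succ (Fin.succAbove 1)).det =
      p (s + 2) * (tridiag p q r (s + 2) n).det := by
    rw [det_succ_column_zero, Fin.sum_univ_succ]
    simp only [submatrix_apply, Fin.succ_zero_eq_one, Fin.one_succAbove_zero, Fin.succAbove_zero,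
      submatrix_submatrix, hcol, h10, Fin.val_zero, pow_zero, one_mul, mul_zero, zero_mul,
      Finset.sum_const_zero, add_zero]
    rw [tridiag_submatrix p q r s 2 (fun i => by simp; omega) (fun i => by simp; omega)]
  rw [det_succ_row_zero, Fin.sum_univ_succ, Fin.sum_univ_succ, Fin.succ_zero_eq_one, hminor0,
    hminor1]
  simp only [Fin.val_zero, Fin.val_one, Fin.val_succ, pow_zero, pow_one, h00, h01, hrow,
    mul_zero, zero_mul, Finset.sum_const_zero, add_zero]
  ring

theorem det_tridiag_add (s k l : ℕ) :
    (tridiag p q r s (k + l + 2)).det =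
      (tridiag p q r s (k + 1)).det * (tridiag p q r (s + k + 1) (l + 1)).det
        - p (s + k + 2) * r (s + k + 2) * (tridiag p q r s k).det
          * (tridiag p q r (s + k + 2) l).det := by
  induction k using Nat.twoStepInduction generalizing s with
  | zero =>
    rw [zero_add, det_tridiag_succ_succ, det_tridiag_zero, det_tridiag_one]
    ring
  | one =>
    rw [show 1 + l + 2 = l + 1 + 2 by ring, det_tridiag_succ_succ, det_tridiag_succ_succ,
      det_tridiag_succ_succ p q r s 0, det_tridiag_zero, det_tridiag_one, det_tridiag_one]
    ring_nf
  | more n ih0 ih1 =>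
    have e1 := ih1 (s + 1)
    have e0 := ih0 (s + 2)
    rw [show n + 1 + l + 2 = n + l + 3 by ring] at e1
    rw [show n + 2 + l + 2 = n + l + 2 + 2 by ring, det_tridiag_succ_succ,
      det_tridiag_succ_succ p q r s (n + 1), det_tridiag_succ_succ p q r s n]
    linear_combination (norm := ring_nf) q (s + 1) * e1 - p (s + 2) * r (s + 2) * e0

theorem det_submatrix_succAbove_tridiag (s n : ℕ) (i : Fin (n + 1)) :
    ((tridiag p q r s (n + 1)).submatrix i.succAbove i.succAbove).det =
      (tridiag p q r s i).det * (tridiag p q r (s + i + 1) (n - i)).det := by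
  let f : Fin i ⊕ Fin (n - i) ≃ Fin n := finSumFinEquiv.trans (finCongr (by omega))
  let e : Fin i ⊕ Fin (n - i) → Fin (n + 1) := i.succAbove ∘ f
  have he_left : ∀ a, (e (Sum.inl a) : ℕ) = 0 + a := fun a => by
    simp [e, f, Fin.succAbove, Fin.lt_def]
  have he_right : ∀ a, (e (Sum.inr a) : ℕ) = (i + 1) + a := fun a => by
    simp [e, f, Fin.succAbove, Fin.lt_def]; omega
  set M := (tridiag p q r s (n + 1)).submatrix e e
  have hM : M.toBlocks₂₁ = 0 := by
    ext a b
    exact tridiag_apply_eq_zero p q r (Or.inr (by rw [he_left, he_right]; omega))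
  have h11 : M.toBlocks₁₁ = tridiag p q r s i :=
    (tridiag_submatrix p q r s 0 (f := fun a => e (Sum.inl a)) he_left he_left).trans
      (by rw [add_zero])
  have h22 : M.toBlocks₂₂ = tridiag p q r (s + i + 1) (n - i) :=
    (tridiag_submatrix p q r s (i + 1) (f := fun a => e (Sum.inr a)) he_right he_right).trans
      (by rw [add_assoc])
  rw [← det_submatrix_equiv_self f, submatrix_submatrix]
  change M.det = _
  rw [← M.fromBlocks_toBlocks, hM, det_fromBlocks_zero₂₁, h11, h22]

/-- `det_tridiag_add` with its trailing term rewritten by the first-row recurrence of the lower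
block, a form that also holds when the lower block is empty. -/
theorem det_tridiag_add_succ (s k l : ℕ) :
    (tridiag p q r s (k + l + 1)).det =
      (tridiag p q r s (k + 1)).det * (tridiag p q r (s + k + 1) l).det
        + (tridiag p q r s k).det * ((tridiag p q r (s + k) (l + 1)).det
          - q (s + k + 1) * (tridiag p q r (s + k + 1) l).det) := by
  cases l with
  | zero =>
    rw [add_zero, det_tridiag_zero, det_tridiag_one]
    ring
  | succ l =>
    rw [show k + (l + 1) + 1 = k + l + 2 by ring, det_tridiag_add, det_tridiag_succ_succ]
    ring_nf

end Tridiagonal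

theorem tridiag_inv_apply_self {K : Type*} [Field K] (p q r : ℕ → K) {m : ℕ} (i : Fin m)
    (hD : (tridiag p q r 0 i).det ≠ 0) (hE : (tridiag p q r (i + 1) (m - (i + 1))).det ≠ 0) :
    (tridiag p q r 0 m)⁻¹ i i =
      ((tridiag p q r 0 (i + 1)).det / (tridiag p q r 0 i).det
        + (tridiag p q r i (m - i)).det / (tridiag p q r (i + 1) (m - (i + 1))).det
        - q (i + 1))⁻¹ := by
  obtain ⟨n, rfl⟩ := Nat.exists_eq_add_one_of_ne_zero i.pos.ne'
  have hadj : (tridiag p q r 0 (n + 1)).adjugate i i =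
      (tridiag p q r 0 i).det * (tridiag p q r (i + 1) (n - i)).det := by
    rw [adjugate_fin_succ_eq_det_submatrix, det_submatrix_succAbove_tridiag, ← two_mul,
      pow_mul, neg_one_sq, one_pow, one_mul, zero_add]
  have hdet := det_tridiag_add_succ p q r 0 i (n - i)
  rw [show (i : ℕ) + (n - i) + 1 = n + 1 by omega] at hdet
  rw [Nat.add_sub_add_right] at hE ⊢
  rw [show n + 1 - i = n - i + 1 by omega, inv_def, Matrix.smul_apply, hadj,
    Ring.inverse_eq_inv', smul_eq_mul, hdet]
  simp only [zero_add]
  field_simp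
  ring

theorem leadingMinor_tridiag (p q r : ℕ → ℝ) {m k : ℕ} (hk : k ≤ m) :
    leadingMinor (tridiag p q r 0 m) k = (tridiag p q r 0 k).det := by
  rw [leadingMinor, dif_pos hk, tridiag_submatrix p q r 0 0 (fun i => by simp) (fun i => by simp)]

theorem trailingMinor_tridiag (p q r : ℕ → ℝ) {m k : ℕ} (hk : k ≤ m) :
    trailingMinor (tridiag p q r 0 m) (k + 1) = (tridiag p q r k (m - k)).det := by
  rw [trailingMinor, dif_pos ⟨by omega, by omega⟩,
    tridiag_submatrix p q r 0 k (fun i => by simp) (fun i => by simp), zero_add,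
    Nat.add_sub_add_right]

theorem stmt_4_general (m : ℕ)
    (p q r : ℕ → ℝ) (A : Matrix (Fin m) (Fin m) ℝ)
    (hA : ∀ i j : Fin m, A i j =
      if (i : ℕ) = j then q ((i : ℕ) + 1)
      else if (i : ℕ) = (j : ℕ) + 1 then p ((i : ℕ) + 1)
      else if (j : ℕ) = (i : ℕ) + 1 then r ((j : ℕ) + 1)
      else 0)
    (hD : ∀ k : ℕ, k ≤ m → leadingMinor A k ≠ 0)
    (hE : ∀ k : ℕ, 1 ≤ k → k ≤ m + 1 → trailingMinor A k ≠ 0) :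
    ∀ i : Fin m, A⁻¹ i i =
      (leadingMinor A ((i : ℕ) + 1) / leadingMinor A (i : ℕ)
        + trailingMinor A ((i : ℕ) + 1) / trailingMinor A ((i : ℕ) + 2)
        - q ((i : ℕ) + 1))⁻¹ := by
  intro i
  obtain rfl : A = tridiag p q r 0 m := by
    ext i j
    simp [hA, tridiag]
  have hD' := hD i i.isLt.le
  have hE' := hE (i + 1 + 1) (by omega) (by omega)
  rw [leadingMinor_tridiag p q r i.isLt.le] at hD'
  rw [trailingMinor_tridiag p q r i.isLt] at hE'
  rw [show (i : ℕ) + 2 = i + 1 + 1 from rfl, leadingMinor_tridiag p q r i.isLt,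
    leadingMinor_tridiag p q r i.isLt.le, trailingMinor_tridiag p q r i.isLt.le,
    trailingMinor_tridiag p q r i.isLt]
  exact tridiag_inv_apply_self p q r i hD' hE'

theorem stmt_4 (m : ℕ) (hm : 1 ≤ m)
    (p q r : ℕ → ℝ) (A : Matrix (Fin m) (Fin m) ℝ)
    (hA : ∀ i j : Fin m, A i j =
      if (i : ℕ) = j then q ((i : ℕ) + 1)
      else if (i : ℕ) = (j : ℕ) + 1 then p ((i : ℕ) + 1)
      else if (j : ℕ) = (i : ℕ) + 1 then r ((j : ℕ) + 1)
      else 0)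
    (hdet : IsUnit A.det)
    (hD : ∀ k : ℕ, k ≤ m → leadingMinor A k ≠ 0)
    (hE : ∀ k : ℕ, 1 ≤ k → k ≤ m + 1 → trailingMinor A k ≠ 0) :
    ∀ i : Fin m, A⁻¹ i i =
      (leadingMinor A ((i : ℕ) + 1) / leadingMinor A (i : ℕ)
        + trailingMinor A ((i : ℕ) + 1) / trailingMinor A ((i : ℕ) + 2)
        - q ((i : ℕ) + 1))⁻¹ :=
  stmt_4_general m p q r A hA hD hE
end

section
/- Let A be an invertible m×m tridiagonal matrix with nonzero leading principal minors. Then for i > j, the entry (A^{-1})_{ij} equals (A^{-1})_{ii} · ∏_{ξ=j+1}^{i} (−p_ξ / Λ_ξ), where Λ_ξ = D_{ξ-1}/D_{ξ-2} is the ratio of consecutive leading principal minors and p_ξ is the subdiagonal entry A_{ξ,ξ-1}. -/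
open Matrix Finset

theorem Matrix.det_mul_apply_last_of_vecMul_eq_single {R : Type*} [CommRing R] {n : ℕ}
    (M : Matrix (Fin (n + 1)) (Fin (n + 1)) R) (w : Fin (n + 1) → R) (c : R)
    (h : w ᵥ* M = Pi.single (Fin.last n) c) :
    M.det * w (Fin.last n) = c * (M.submatrix Fin.castSucc Fin.castSucc).det := by
  have h' := congrFun (congrArg (· ᵥ* M.adjugate) h) (Fin.last n)
  simp only [vecMul_vecMul, mul_adjugate, vecMul_smul, vecMul_one, single_vecMul,
    Pi.smul_apply, smul_eq_mul] at h'
  rw [h', row_apply, adjugate_fin_succ_eq_det_submatrix, Fin.succAbove_last]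
  simp

theorem Fin.sum_univ_eq_sum_castLE_add_of_eq_zero {M : Type*} [AddCommMonoid M] {m k : ℕ}
    (hk : k < m) (f : Fin m → M) (hf : ∀ s : Fin m, k < s → f s = 0) :
    ∑ s, f s = ∑ s : Fin k, f (Fin.castLE hk.le s) + f ⟨k, hk⟩ := by
  let F : ℕ → M := fun s => if h : s < m then f ⟨s, h⟩ else 0
  have hF : ∀ s : Fin m, F s = f s := fun s => dif_pos s.isLt
  have hFk : ∀ s : Fin k, F s = f (Fin.castLE hk.le s) := fun s => dif_pos (by omega)
  rw [← sum_congr rfl fun s _ => hF s, ← sum_congr rfl fun s _ => hFk s,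
    Fin.sum_univ_eq_sum_range F, Fin.sum_univ_eq_sum_range F,
    ← sum_range_add_sum_Ico F (show k + 1 ≤ m by omega), sum_range_succ,
    show F k = f ⟨k, hk⟩ from dif_pos hk]
  refine (congrArg _ (sum_eq_zero fun s hs => ?_)).trans (add_zero _)
  obtain ⟨hks, hsm⟩ := mem_Ico.1 hs
  exact (dif_pos hsm).trans (hf _ hks)

theorem Finset.eq_mul_prod_Ico_of_eq_mul {M : Type*} [CommMonoid M] {f g : ℕ → M} {j i : ℕ}
    (hji : j ≤ i) (h : ∀ k, j ≤ k → k < i → f k = f (k + 1) * g k) :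
    f j = f i * ∏ k ∈ Ico j i, g k := by
  induction i, hji using Nat.le_induction with
  | base => simp
  | succ i hji ih =>
    rw [ih fun k hjk hki => h k hjk (by omega), prod_Ico_succ_top hji, h i hji (by omega)]
    ac_rfl

theorem leadingMinor_zero {m : ℕ} (A : Matrix (Fin m) (Fin m) ℝ) : leadingMinor A 0 = 1 := by
  rw [leadingMinor, dif_pos m.zero_le, det_fin_zero]

theorem leadingMinor_self {m : ℕ} (A : Matrix (Fin m) (Fin m) ℝ) :
    leadingMinor A m = A.det := by
  rw [leadingMinor, dif_pos le_rfl, Fin.castLE_rfl, submatrix_id_id]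

theorem leadingMinor_succ_mul_eq_of_vecMul_eq_zero {m k : ℕ} (hk : k + 1 < m)
    (A : Matrix (Fin m) (Fin m) ℝ) (hA : ∀ s t : Fin m, (t : ℕ) + 1 < s → A s t = 0)
    (u : Fin m → ℝ) (hu : ∀ t : Fin m, (t : ℕ) ≤ k → (u ᵥ* A) t = 0) :
    leadingMinor A (k + 1) * u ⟨k, by omega⟩
      = -(u ⟨k + 1, hk⟩ * A ⟨k + 1, hk⟩ ⟨k, by omega⟩) * leadingMinor A k := by
  have hk₁ : k + 1 ≤ m := hk.le
  set B := A.submatrix (Fin.castLE hk₁) (Fin.castLE hk₁)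
  have hB : (u ∘ Fin.castLE hk₁) ᵥ* B
      = Pi.single (Fin.last k) (-(u ⟨k + 1, hk⟩ * A ⟨k + 1, hk⟩ ⟨k, by omega⟩)) := by
    funext t
    have ht := hu (Fin.castLE hk₁ t) (by simp; omega)
    rw [vecMul, dotProduct, Fin.sum_univ_eq_sum_castLE_add_of_eq_zero hk _
      fun s hs => by rw [hA s _ (by simp; omega), mul_zero]] at ht
    rw [show ((u ∘ Fin.castLE hk₁) ᵥ* B) t = _ from eq_neg_of_add_eq_zero_left ht]
    rcases eq_or_ne t (Fin.last k) with rfl | htk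
    · rw [Pi.single_eq_same]; rfl
    · have : (t : ℕ) < k := Fin.val_lt_last htk
      rw [Pi.single_eq_of_ne htk, hA _ _ (by simp; omega), mul_zero, neg_zero]
  rw [leadingMinor, leadingMinor, dif_pos hk₁, dif_pos (by omega)]
  exact det_mul_apply_last_of_vecMul_eq_single B _ _ hB

/-- `Fin` indices start at `0`, while `p q r` are indexed from `1` as in the paper. -/
def IsTridiagonalWith {m : ℕ} (A : Matrix (Fin m) (Fin m) ℝ) (p q r : ℕ → ℝ) : Prop :=
  ∀ i j : Fin m, A i j =
    if (i : ℕ) = j then q ((i : ℕ) + 1)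
    else if (i : ℕ) = (j : ℕ) + 1 then p ((i : ℕ) + 1)
    else if (j : ℕ) = (i : ℕ) + 1 then r ((j : ℕ) + 1)
    else 0

namespace IsTridiagonalWith

variable {m : ℕ} {A : Matrix (Fin m) (Fin m) ℝ} {p q r : ℕ → ℝ}

theorem apply_eq_zero_of_add_one_lt (hA : IsTridiagonalWith A p q r) {s t : Fin m}
    (hst : (t : ℕ) + 1 < s) : A s t = 0 := by
  rw [hA, if_neg (by omega), if_neg (by omega), if_neg (by omega)]

theorem apply_add_one_self (hA : IsTridiagonalWith A p q r) {k : ℕ} (hk : k + 1 < m) :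
    A ⟨k + 1, hk⟩ ⟨k, by omega⟩ = p (k + 2) := by
  rw [hA, if_neg (by simp), if_pos rfl]

theorem inv_apply_eq_mul_of_lt (hA : IsTridiagonalWith A p q r)
    (hD : ∀ k : ℕ, 1 ≤ k → k ≤ m → leadingMinor A k ≠ 0) {i : Fin m} {k : ℕ} (hki : k < i) :
    A⁻¹ i ⟨k, by omega⟩ = A⁻¹ i ⟨k + 1, by omega⟩ *
      (-(p (k + 2)) / (leadingMinor A (k + 1) / leadingMinor A k)) := by
  have hunit : IsUnit A.det := by
    rw [← leadingMinor_self]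
    exact (hD m (by omega) le_rfl).isUnit
  have hrow : ∀ t : Fin m, (t : ℕ) ≤ k → (A⁻¹ i ᵥ* A) t = 0 := fun t ht =>
    show (A⁻¹ * A) i t = 0 by rw [nonsing_inv_mul A hunit, one_apply_ne (by omega)]
  have key := leadingMinor_succ_mul_eq_of_vecMul_eq_zero (by omega) A
    (fun _ _ => hA.apply_eq_zero_of_add_one_lt) _ hrow
  rw [hA.apply_add_one_self] at key
  have hk₁ : leadingMinor A (k + 1) ≠ 0 := hD _ (by omega) (by omega)
  have hk₀ : leadingMinor A k ≠ 0 := by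
    rcases k with _ | k
    · simp [leadingMinor_zero]
    · exact hD _ (by omega) (by omega)
  field_simp
  linear_combination key

end IsTridiagonalWith

theorem stmt_5 (m : ℕ)
    (p q r : ℕ → ℝ) (A : Matrix (Fin m) (Fin m) ℝ)
    (hA : ∀ i j : Fin m, A i j =
      if (i : ℕ) = j then q ((i : ℕ) + 1)
      else if (i : ℕ) = (j : ℕ) + 1 then p ((i : ℕ) + 1)
      else if (j : ℕ) = (i : ℕ) + 1 then r ((j : ℕ) + 1)
      else 0)
    (hD : ∀ k : ℕ, 1 ≤ k → k ≤ m → leadingMinor A k ≠ 0) :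
    ∀ i j : Fin m, j < i →
      A⁻¹ i j = A⁻¹ i i *
        ∏ ξ ∈ Finset.Icc ((j : ℕ) + 2) ((i : ℕ) + 1),
          (-(p ξ) / (leadingMinor A (ξ - 1) / leadingMinor A (ξ - 2))) := by
  intro i j hji
  set g : ℕ → ℝ := fun ξ => -(p ξ) / (leadingMinor A (ξ - 1) / leadingMinor A (ξ - 2))
  let v : ℕ → ℝ := fun k => if h : k < m then A⁻¹ i ⟨k, h⟩ else 0
  have hv : ∀ s : Fin m, v s = A⁻¹ i s := fun s => dif_pos s.isLt
  have hstep : ∀ k, (j : ℕ) ≤ k → k < i → v k = v (k + 1) * g (k + 2) := fun k _ hki => by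
    simp only [v, g, dif_pos (show k < m by omega), dif_pos (show k + 1 < m by omega)]
    exact IsTridiagonalWith.inv_apply_eq_mul_of_lt hA hD hki
  have htelescope := eq_mul_prod_Ico_of_eq_mul hji.le hstep
  rw [hv, hv, prod_Ico_add' g] at htelescope
  rwa [← Ico_add_one_right_eq_Icc]
end
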